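/- arXiv:1506.02081 — 2 statements merged into one kernel-verified Lean document; each statement's English description precedes it below -/
import Mathlib

section
/- Suppose 0 < γ ≤ 2/(μ + L). Then for every k ≥ 0 the IAG iterates satisfy dist_{k+1}² ≤ p(γ)·dist_k² + q(γ)·max{ dist_ℓ² : max(k − 2K, 0) ≤ ℓ ≤ k }, where p(γ) = 1 − 2γμL/(μ + L) and q(γ) = 9·γ⁴·L⁴·K² + 6·γ²·L²·K. -/
/-!
Write `x (k+1) - x* = (x k - x*) - γ (∇F (x k) + e k)`. Strong convexity and the Lipschitz bound
give `⟪∇F (x k), x k - x*⟫ ≥ μ ‖x k - x*‖²` and `‖∇F (x k)‖ ≤ L ‖x k - x*‖`, so the exact gradient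
step alone satisfies `‖(x k - x*) - γ ∇F (x k)‖² ≤ (1 - 2γμ + γ²L²) ‖x k - x*‖²`. Let `R²` be the
maximum of `‖x ℓ - x*‖²` over `ℓ ∈ [k - 2K, k]`. For `j ∈ [k - K, k]` the aggregated gradient
`g j` only samples iterates of that window, so `‖g j‖ ≤ L R`; hence every delayed iterate
`x (τ i k)` lies within `K γ L R` of `x k`, and `‖e k‖ ≤ γ K L² R`. Expanding the square, everything
except `(1 - 2γμ) ‖x k - x*‖²` is at most `(9γ⁴L⁴K² + 6γ²L²K) R²`, and `1 - 2γμ ≤ p(γ)` because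
`μL/(μ + L) ≤ μ`.
-/

open scoped RealInnerProductSpace

section Convexity

variable {E : Type*} [NormedAddCommGroup E] [NormedSpace ℝ E]

theorem ConvexOn.fderiv_apply_sub_le_fderiv_apply_sub {φ : E → ℝ} (hφ : ConvexOn ℝ Set.univ φ)
    (hd : Differentiable ℝ φ) (a b : E) :
    fderiv ℝ φ a (b - a) ≤ fderiv ℝ φ b (b - a) := by
  have hline (t : ℝ) : HasDerivAt (φ ∘ AffineMap.lineMap a b)
      (fderiv ℝ φ (AffineMap.lineMap a b t) (b - a)) t :=
    (hd _).hasFDerivAt.comp_hasDerivAt t AffineMap.hasDerivAt_lineMap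
  have hconv : ConvexOn ℝ Set.univ (φ ∘ (AffineMap.lineMap a b : ℝ → E)) := by
    simpa using hφ.comp_affineMap (AffineMap.lineMap a b)
  have hmono := hconv.monotoneOn_deriv (fun t _ => (hline t).differentiableAt)
    (Set.mem_univ 0) (Set.mem_univ 1) zero_le_one
  simpa [(hline _).deriv] using hmono

end Convexity

section InnerProductSpace

variable {E : Type*} [NormedAddCommGroup E] [InnerProductSpace ℝ E]

theorem gradient_fun_sum [CompleteSpace E] {ι : Type*} (s : Finset ι) {f : ι → E → ℝ} {y : E}
    (hd : ∀ i ∈ s, DifferentiableAt ℝ (f i) y) :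
    gradient (fun z => ∑ i ∈ s, f i z) y = ∑ i ∈ s, gradient (f i) y := by
  apply (InnerProductSpace.toDual ℝ E).injective
  rw [toDual_gradient, map_sum, fderiv_fun_sum hd]
  simp only [toDual_gradient]

theorem mul_norm_sub_sq_le_inner_gradient_sub [CompleteSpace E] {F : E → ℝ} {μ : ℝ}
    (hd : Differentiable ℝ F) (hsc : ConvexOn ℝ Set.univ fun y => F y - μ / 2 * ‖y‖ ^ 2) (a b : E) :
    μ * ‖a - b‖ ^ 2 ≤ ⟪gradient F a - gradient F b, a - b⟫ := by
  have hG (y : E) : HasFDerivAt (fun y => F y - μ / 2 * ‖y‖ ^ 2)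
      (fderiv ℝ F y - (μ / 2) • (2 • innerSL ℝ y)) y :=
    (hd y).hasFDerivAt.sub ((hasStrictFDerivAt_norm_sq y).hasFDerivAt.const_mul (μ / 2))
  have hmono := hsc.fderiv_apply_sub_le_fderiv_apply_sub (fun y => (hG y).differentiableAt) b a
  simp only [(hG _).fderiv, sub_apply, smul_apply,
    innerSL_apply_apply, smul_eq_mul, nsmul_eq_mul] at hmono
  have hsq : ‖a - b‖ ^ 2 = ⟪a, a - b⟫ - ⟪b, a - b⟫ := by
    rw [← inner_sub_left, real_inner_self_eq_norm_sq]
  rw [inner_sub_left, inner_gradient_left, inner_gradient_left, hsq]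
  linarith

theorem norm_sub_smul_sq_le {a G : E} {γ μ L : ℝ} (hγ : 0 ≤ γ)
    (hmono : μ * ‖a‖ ^ 2 ≤ ⟪G, a⟫) (hG : ‖G‖ ≤ L * ‖a‖) :
    ‖a - γ • G‖ ^ 2 ≤ (1 - 2 * γ * μ) * ‖a‖ ^ 2 + γ ^ 2 * (L * ‖a‖) ^ 2 := by
  rw [norm_sub_sq_real, real_inner_smul_right, real_inner_comm, norm_smul,
    Real.norm_of_nonneg hγ]
  have := pow_le_pow_left₀ (norm_nonneg G) hG 2
  nlinarith

theorem norm_sub_smul_add_sq_le {a G e : E} {γ μ L K R : ℝ} (hγ : 0 ≤ γ) (hL : 0 ≤ L)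
    (hK : 1 ≤ K) (hmono : μ * ‖a‖ ^ 2 ≤ ⟪G, a⟫) (hG : ‖G‖ ≤ L * ‖a‖) (ha : ‖a‖ ≤ R)
    (he : ‖e‖ ≤ L * (K * (γ * (L * R)))) :
    ‖a - γ • (G + e)‖ ^ 2 ≤
      (1 - 2 * γ * μ) * ‖a‖ ^ 2 + (9 * γ ^ 4 * L ^ 4 * K ^ 2 + 6 * γ ^ 2 * L ^ 2 * K) * R ^ 2 := by
  have hy : ‖a - γ • G‖ ≤ (1 + γ * L) * R := by
    calc ‖a - γ • G‖ ≤ ‖a‖ + γ * (L * ‖a‖) := by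
          refine (norm_sub_le a (γ • G)).trans ?_
          rw [norm_smul, Real.norm_of_nonneg hγ]
          gcongr
      _ ≤ (1 + γ * L) * R := by nlinarith [norm_nonneg a, mul_nonneg hγ hL]
  have htri : ‖a - γ • (G + e)‖ ≤ ‖a - γ • G‖ + γ * ‖e‖ := by
    rw [smul_add, ← sub_sub]
    exact (norm_sub_le _ _).trans_eq (by rw [norm_smul, Real.norm_of_nonneg hγ])
  have hR : 0 ≤ R := (norm_nonneg a).trans ha
  calc ‖a - γ • (G + e)‖ ^ 2 ≤ (‖a - γ • G‖ + γ * ‖e‖) ^ 2 := by gcongr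
    _ = ‖a - γ • G‖ ^ 2 + γ * (2 * ‖a - γ • G‖ + γ * ‖e‖) * ‖e‖ := by ring
    _ ≤ (1 - 2 * γ * μ) * ‖a‖ ^ 2 + γ ^ 2 * (L * R) ^ 2 +
        γ * (2 * ((1 + γ * L) * R) + γ * (L * (K * (γ * (L * R))))) *
          (L * (K * (γ * (L * R)))) := by
      gcongr
      · exact (norm_sub_smul_sq_le hγ hmono hG).trans (by gcongr)
    _ ≤ _ := by
      have ht : 0 ≤ γ * L := mul_nonneg hγ hL
      -- with `t = γL`: `t² ≤ Kt²` and `2Kt³ ≤ Kt² + Kt⁴ ≤ Kt² + K²t⁴`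
      have hcoeff : (γ * L) ^ 2 + 2 * K * (γ * L) ^ 2 * (1 + γ * L) + K ^ 2 * (γ * L) ^ 4 ≤
          9 * K ^ 2 * (γ * L) ^ 4 + 6 * K * (γ * L) ^ 2 := by
        nlinarith [mul_nonneg (by linarith : (0:ℝ) ≤ K) (sq_nonneg (γ * L - (γ * L) ^ 2)),
          mul_nonneg (sub_nonneg.2 hK) (sq_nonneg (γ * L)),
          mul_nonneg (mul_nonneg (by linarith : (0:ℝ) ≤ K) (sub_nonneg.2 hK)) (pow_nonneg ht 4)]
      nlinarith [mul_le_mul_of_nonneg_right hcoeff (sq_nonneg R)]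

end InnerProductSpace

theorem norm_sum_sub_le_of_lipschitz {ι E F : Type*} [SeminormedAddCommGroup E]
    [SeminormedAddCommGroup F] (s : Finset ι) {G : ι → E → F} {Li : ι → ℝ}
    (hLi : ∀ i, 0 ≤ Li i) (hG : ∀ i y z, ‖G i y - G i z‖ ≤ Li i * ‖y - z‖) {y z : ι → E} {r : ℝ}
    (hr : ∀ i ∈ s, ‖y i - z i‖ ≤ r) :
    ‖∑ i ∈ s, (G i (y i) - G i (z i))‖ ≤ (∑ i ∈ s, Li i) * r := by
  rw [Finset.sum_mul]
  exact (norm_sum_le _ _).trans <| Finset.sum_le_sum fun i hi =>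
    (hG i _ _).trans <| mul_le_mul_of_nonneg_left (hr i hi) (hLi i)

theorem norm_sub_le_mul_of_norm_succ_sub_le {E : Type*} [SeminormedAddCommGroup E] {x : ℕ → E}
    {a b : ℕ} (hab : a ≤ b) {c : ℝ} (hc : ∀ j, a ≤ j → j < b → ‖x (j + 1) - x j‖ ≤ c) :
    ‖x b - x a‖ ≤ (b - a : ℕ) * c := by
  simpa [dist_eq_norm', Finset.sum_const] using
    dist_le_Ico_sum_of_dist_le (f := x) hab (d := fun _ => c) fun h1 h2 => by
      rw [dist_eq_norm']; exact hc _ h1 h2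

section IAG

variable {ι E : Type*} [Fintype ι] [SeminormedAddCommGroup E]
  {G : ι → E → E} {Li : ι → ℝ} {K : ℕ} {τ : ι → ℕ → ℕ} {x g : ℕ → E} {xs : E} {R : ℝ} {k : ℕ}

theorem norm_aggregate_le (hLi : ∀ i, 0 ≤ Li i)
    (hG : ∀ i y z, ‖G i y - G i z‖ ≤ Li i * ‖y - z‖) (hxs : ∑ i, G i xs = 0)
    (hg : ∀ j, g j = ∑ i, G i (x (τ i j))) (hτ : ∀ i j, j - K ≤ τ i j ∧ τ i j ≤ j)
    (hR : ∀ ℓ ∈ Finset.Icc (k - 2 * K) k, ‖x ℓ - xs‖ ≤ R) {j : ℕ} (hj₁ : k - K ≤ j) (hj₂ : j ≤ k) :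
    ‖g j‖ ≤ (∑ i, Li i) * R := by
  rw [hg, ← sub_zero (∑ i, _), ← hxs, ← Finset.sum_sub_distrib]
  refine norm_sum_sub_le_of_lipschitz _ hLi hG fun i _ => hR _ (Finset.mem_Icc.2 ⟨?_, ?_⟩)
  · have := (hτ i j).1
    omega
  · exact (hτ i j).2.trans hj₂

theorem norm_sub_delayed_le [NormedSpace ℝ E] (hLi : ∀ i, 0 ≤ Li i)
    (hG : ∀ i y z, ‖G i y - G i z‖ ≤ Li i * ‖y - z‖) (hxs : ∑ i, G i xs = 0)
    (hg : ∀ j, g j = ∑ i, G i (x (τ i j))) (hτ : ∀ i j, j - K ≤ τ i j ∧ τ i j ≤ j)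
    (hR : ∀ ℓ ∈ Finset.Icc (k - 2 * K) k, ‖x ℓ - xs‖ ≤ R) {γ : ℝ} (hγ : 0 ≤ γ)
    (hx : ∀ j, x (j + 1) = x j - γ • g j) (i : ι) :
    ‖x k - x (τ i k)‖ ≤ K * (γ * ((∑ i, Li i) * R)) := by
  have hdelay : k - τ i k ≤ K := by
    have := (hτ i k).1
    omega
  have hR₀ : 0 ≤ R := (norm_nonneg _).trans (hR k (Finset.mem_Icc.2 ⟨Nat.sub_le _ _, le_rfl⟩))
  calc ‖x k - x (τ i k)‖ ≤ (k - τ i k : ℕ) * (γ * ((∑ i, Li i) * R)) :=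
        norm_sub_le_mul_of_norm_succ_sub_le (hτ i k).2 fun j hj₁ hj₂ => by
          rw [hx, sub_sub_cancel_left, norm_neg, norm_smul, Real.norm_of_nonneg hγ]
          exact mul_le_mul_of_nonneg_left
            (norm_aggregate_le hLi hG hxs hg hτ hR (by omega) hj₂.le) hγ
    _ ≤ K * (γ * ((∑ i, Li i) * R)) := by
      gcongr
      exact mul_nonneg hγ (mul_nonneg (Finset.sum_nonneg fun i _ => hLi i) hR₀)

theorem norm_aggregate_sub_le [NormedSpace ℝ E] (hLi : ∀ i, 0 ≤ Li i)
    (hG : ∀ i y z, ‖G i y - G i z‖ ≤ Li i * ‖y - z‖) (hxs : ∑ i, G i xs = 0)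
    (hg : ∀ j, g j = ∑ i, G i (x (τ i j))) (hτ : ∀ i j, j - K ≤ τ i j ∧ τ i j ≤ j)
    (hR : ∀ ℓ ∈ Finset.Icc (k - 2 * K) k, ‖x ℓ - xs‖ ≤ R) {γ : ℝ} (hγ : 0 ≤ γ)
    (hx : ∀ j, x (j + 1) = x j - γ • g j) :
    ‖g k - ∑ i, G i (x k)‖ ≤ (∑ i, Li i) * (K * (γ * ((∑ i, Li i) * R))) := by
  rw [hg, ← Finset.sum_sub_distrib]
  exact norm_sum_sub_le_of_lipschitz _ hLi hG fun i _ => by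
    rw [norm_sub_rev]
    exact norm_sub_delayed_le hLi hG hxs hg hτ hR hγ hx i

end IAG

theorem iag_dist_sq_perturbed_recursion_general
    (n m : ℕ)
    (f : Fin m → EuclideanSpace ℝ (Fin n) → ℝ)
    (Li : Fin m → ℝ) (hLi : ∀ i, 0 ≤ Li i)
    (L : ℝ) (hL : L = ∑ i, Li i)
    (hdiff : ∀ i, Differentiable ℝ (f i))
    (hlip : ∀ i y z, ‖gradient (f i) y - gradient (f i) z‖ ≤ Li i * ‖y - z‖)
    (K : ℕ) (hK : 1 ≤ K)
    (τ : Fin m → ℕ → ℕ)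
    (hτ : ∀ i k, k - K ≤ τ i k ∧ τ i k ≤ k)
    (F : EuclideanSpace ℝ (Fin n) → ℝ) (hF : F = fun y => ∑ i, f i y)
    (x g : ℕ → EuclideanSpace ℝ (Fin n))
    (hg : ∀ k, g k = ∑ i, gradient (f i) (x (τ i k)))
    (γ : ℝ) (hγ : 0 < γ)
    (hx : ∀ k, x (k + 1) = x k - γ • g k)
    (μ : ℝ) (hμ : 0 < μ)
    (hsc : ConvexOn ℝ Set.univ (fun y => F y - μ / 2 * ‖y‖ ^ 2))
    (xs : EuclideanSpace ℝ (Fin n))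
    (hgxs : gradient F xs = 0) :
    ∀ k, ‖x (k + 1) - xs‖ ^ 2 ≤ (1 - 2 * γ * (μ * L) / (μ + L)) * ‖x k - xs‖ ^ 2 +
      (9 * γ ^ 4 * L ^ 4 * K ^ 2 + 6 * γ ^ 2 * L ^ 2 * K) *
        (Finset.Icc (k - 2 * K) k).sup' (Finset.nonempty_Icc.mpr (Nat.sub_le _ _))
          (fun ℓ => ‖x ℓ - xs‖ ^ 2) := by
  intro k
  set M := (Finset.Icc (k - 2 * K) k).sup' (Finset.nonempty_Icc.mpr (Nat.sub_le _ _))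
    (fun ℓ => ‖x ℓ - xs‖ ^ 2)
  have hwindow : ∀ ℓ ∈ Finset.Icc (k - 2 * K) k, ‖x ℓ - xs‖ ≤ √M := fun ℓ hℓ =>
    abs_norm (x ℓ - xs) ▸ Real.abs_le_sqrt (Finset.le_sup' (fun ℓ => ‖x ℓ - xs‖ ^ 2) hℓ)
  have hk : k ∈ Finset.Icc (k - 2 * K) k := Finset.mem_Icc.2 ⟨Nat.sub_le _ _, le_rfl⟩
  have hM : 0 ≤ M := (sq_nonneg _).trans (Finset.le_sup' (fun ℓ => ‖x ℓ - xs‖ ^ 2) hk)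
  have hL₀ : 0 ≤ L := hL ▸ Finset.sum_nonneg fun i _ => hLi i
  have hgradF (y) : gradient F y = ∑ i, gradient (f i) y :=
    hF ▸ gradient_fun_sum _ fun i _ => (hdiff i).differentiableAt
  have hmono := mul_norm_sub_sq_le_inner_gradient_sub
    (hF ▸ Differentiable.fun_sum fun i _ => hdiff i) hsc (x k) xs
  rw [hgxs, sub_zero] at hmono
  have hFlip : ‖gradient F (x k)‖ ≤ L * ‖x k - xs‖ := by
    rw [← sub_zero (gradient F (x k)), ← hgxs, hgradF, hgradF, ← Finset.sum_sub_distrib, hL]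
    exact norm_sum_sub_le_of_lipschitz _ hLi hlip fun _ _ => le_rfl
  have herr : ‖g k - gradient F (x k)‖ ≤ L * (K * (γ * (L * √M))) := by
    rw [hgradF, hL]
    exact norm_aggregate_sub_le hLi hlip (hgradF xs ▸ hgxs) hg hτ hwindow hγ.le hx
  calc ‖x (k + 1) - xs‖ ^ 2
      = ‖(x k - xs) - γ • (gradient F (x k) + (g k - gradient F (x k)))‖ ^ 2 := by
        rw [hx, add_sub_cancel, sub_right_comm]
    _ ≤ (1 - 2 * γ * μ) * ‖x k - xs‖ ^ 2 +
        (9 * γ ^ 4 * L ^ 4 * K ^ 2 + 6 * γ ^ 2 * L ^ 2 * K) * √M ^ 2 :=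
      norm_sub_smul_add_sq_le hγ.le hL₀ (by exact_mod_cast hK) hmono hFlip (hwindow k hk) herr
    _ ≤ _ := by
      rw [Real.sq_sqrt hM]
      gcongr
      rw [div_le_iff₀ (by positivity)]
      nlinarith [mul_pos hγ (mul_pos hμ hμ)]

/-- The squared distances of IAG iterates to the optimum satisfy a perturbed linear
recursion with coefficients `p(γ)` and `q(γ)`. -/
theorem iag_dist_sq_perturbed_recursion
    (n m : ℕ) (hm : 1 ≤ m)
    (f : Fin m → EuclideanSpace ℝ (Fin n) → ℝ)
    (Li : Fin m → ℝ) (hLi : ∀ i, 0 ≤ Li i)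
    (L : ℝ) (hL : L = ∑ i, Li i)
    (hconv : ∀ i, ConvexOn ℝ Set.univ (f i))
    (hdiff : ∀ i, Differentiable ℝ (f i))
    (hlip : ∀ i y z, ‖gradient (f i) y - gradient (f i) z‖ ≤ Li i * ‖y - z‖)
    (K : ℕ) (hK : 1 ≤ K)
    (τ : Fin m → ℕ → ℕ)
    (hτ : ∀ i k, k - K ≤ τ i k ∧ τ i k ≤ k)
    (hτ0 : ∀ i, τ i 0 = 0)
    (F : EuclideanSpace ℝ (Fin n) → ℝ) (hF : F = fun y => ∑ i, f i y)
    (x g e : ℕ → EuclideanSpace ℝ (Fin n))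
    (hg : ∀ k, g k = ∑ i, gradient (f i) (x (τ i k)))
    (he : ∀ k, e k = g k - gradient F (x k))
    (γ : ℝ) (hγ : 0 < γ)
    (hx : ∀ k, x (k + 1) = x k - γ • g k)
    (μ : ℝ) (hμ : 0 < μ) (hμL : μ ≤ L)
    (hsc : ConvexOn ℝ Set.univ (fun y => F y - μ / 2 * ‖y‖ ^ 2))
    (xs : EuclideanSpace ℝ (Fin n))
    (hmin : ∀ y, F xs ≤ F y) (hgxs : gradient F xs = 0)
    (hγle : γ ≤ 2 / (μ + L)) :
    ∀ k, ‖x (k + 1) - xs‖ ^ 2 ≤ (1 - 2 * γ * (μ * L) / (μ + L)) * ‖x k - xs‖ ^ 2 +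
      (9 * γ ^ 4 * L ^ 4 * K ^ 2 + 6 * γ ^ 2 * L ^ 2 * K) *
        (Finset.Icc (k - 2 * K) k).sup' (Finset.nonempty_Icc.mpr (Nat.sub_le _ _))
          (fun ℓ => ‖x ℓ - xs‖ ^ 2) :=
  iag_dist_sq_perturbed_recursion_general n m f Li hLi L hL hdiff hlip K hK τ hτ F hF x g hg γ hγ hx
    μ hμ hsc xs hgxs
end

section
/- There exist constants b > 0 and γ̄ > 0, depending only on μ, L and K, such that for every stepsize γ with 0 < γ < γ̄ and every momentum parameter β with 0 ≤ β ≤ b·√γ, the IAG-M iterates converge globally linearly: there exists r ∈ [0, 1) such that dist_k ≤ r^k · dist_0 for all k ≥ 0. -/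
/-!
Write `ρ = 1 - γμ/4`. Strong convexity of `f`, minimality of `x⋆` and `L`-smoothness make the
exact gradient step `z ↦ z - γ∇f(z)` a `ρ`-contraction towards `x⋆` as soon as `γL² ≤ μ/2`.
An IAG-M step is this step perturbed by the gradient error, which is at most `L` times the path
length of the last `K` iterates, and by the momentum term. Strong induction on `k` gives, with
`r = 1 - γμ/8`, both `‖x^k - x⋆‖ ≤ r^k ‖x^0 - x⋆‖` and `‖x^k - x^{k-1}‖ ≤ 4L√γ r^k ‖x^0 - x⋆‖`:
looking back `K` steps costs a factor `r^{-K} ≤ 2`, and for small `γ` and `β = O(√γ)` each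
perturbation is at most `γμ/16` times the current bound, which bridges the gap between `ρ` and `r`.
-/

open Finset InnerProductSpace

theorem pow_le_two_mul_pow {r : ℝ} {K k l : ℕ} (hr0 : 0 ≤ r) (hr1 : r ≤ 1) (hrK : 1 / 2 ≤ r ^ K)
    (hkl : k ≤ l + K) : r ^ l ≤ 2 * r ^ k := by
  have h := pow_le_pow_of_le_one hr0 hr1 hkl
  rw [pow_add] at h
  nlinarith [pow_nonneg hr0 l]

theorem sum_Ico_succ_le_of_le_pow_mul {s : ℕ → ℝ} {r M : ℝ} {K k : ℕ} (hr0 : 0 ≤ r) (hr1 : r ≤ 1)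
    (hrK : 1 / 2 ≤ r ^ K) (hM : 0 ≤ M) (hs : ∀ l ≤ k, s l ≤ r ^ l * M) :
    ∑ l ∈ Ico (k - K) k, s (l + 1) ≤ K * (2 * r ^ k * M) := by
  have hterm : ∀ l ∈ Ico (k - K) k, s (l + 1) ≤ 2 * r ^ k * M := fun l hl => by
    rw [mem_Ico] at hl
    exact (hs (l + 1) (by omega)).trans
      (mul_le_mul_of_nonneg_right (pow_le_two_mul_pow hr0 hr1 hrK (by omega)) hM)
  have hcard : ((Ico (k - K) k).card : ℝ) ≤ K := by
    rw [Nat.card_Ico]; exact_mod_cast (by omega : k - (k - K) ≤ K)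
  calc ∑ l ∈ Ico (k - K) k, s (l + 1) ≤ (Ico (k - K) k).card • (2 * r ^ k * M) :=
        sum_le_card_nsmul _ _ _ hterm
    _ ≤ K * (2 * r ^ k * M) := by
        rw [nsmul_eq_mul]; exact mul_le_mul_of_nonneg_right hcard (by positivity)

theorem le_pow_mul_of_delayed_recursion {d s : ℕ → ℝ} {A B β C r : ℝ} {K : ℕ}
    (hd0 : 0 ≤ d 0) (hs0 : s 0 = 0)
    (hd : ∀ k, d (k + 1) ≤ A * d k + B * ∑ l ∈ Ico (k - K) k, s (l + 1) + β * s k)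
    (hs : ∀ k, s (k + 1) ≤ B * d k + B * ∑ l ∈ Ico (k - K) k, s (l + 1) + β * s k)
    (hA : 0 ≤ A) (hB : 0 ≤ B) (hβ : 0 ≤ β) (hC : 0 ≤ C)
    (hr0 : 0 ≤ r) (hr1 : r ≤ 1) (hrK : 1 / 2 ≤ r ^ K)
    (hdr : A + 2 * K * B * C + β * C ≤ r) (hsr : B + 2 * K * B * C + β * C ≤ C * r) (k : ℕ) :
    d k ≤ r ^ k * d 0 ∧ s k ≤ r ^ k * (C * d 0) := by
  induction k using Nat.strong_induction_on with
  | _ k ih =>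
  rcases k with _ | k
  · simp [hs0, mul_nonneg hC hd0]
  obtain ⟨hdk, hsk⟩ := ih k k.lt_succ_self
  have hW := sum_Ico_succ_le_of_le_pow_mul hr0 hr1 hrK (mul_nonneg hC hd0) (s := s) (K := K)
    fun l hl => (ih l (Nat.lt_succ_of_le hl)).2
  have hR : 0 ≤ r ^ k * d 0 := mul_nonneg (pow_nonneg hr0 k) hd0
  constructor
  · calc d (k + 1) ≤ A * d k + B * ∑ l ∈ Ico (k - K) k, s (l + 1) + β * s k := hd k
      _ ≤ A * (r ^ k * d 0) + B * (K * (2 * r ^ k * (C * d 0))) + β * (r ^ k * (C * d 0)) := by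
          gcongr
      _ = (A + 2 * K * B * C + β * C) * (r ^ k * d 0) := by ring
      _ ≤ r * (r ^ k * d 0) := mul_le_mul_of_nonneg_right hdr hR
      _ = r ^ (k + 1) * d 0 := by ring
  · calc s (k + 1) ≤ B * d k + B * ∑ l ∈ Ico (k - K) k, s (l + 1) + β * s k := hs k
      _ ≤ B * (r ^ k * d 0) + B * (K * (2 * r ^ k * (C * d 0))) + β * (r ^ k * (C * d 0)) := by
          gcongr
      _ = (B + 2 * K * B * C + β * C) * (r ^ k * d 0) := by ring
      _ ≤ C * r * (r ^ k * d 0) := mul_le_mul_of_nonneg_right hsr hR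
      _ = r ^ (k + 1) * (C * d 0) := by ring

/- With `C = 4L√γ` bounding `‖x^k - x^{k-1}‖ / (r^k ‖x^0 - x⋆‖)`, the condition
`√γ ≤ μ / (128KL²)` makes the delay term `2K · γL · C ≤ γμ/16`, `β ≤ μ/(64L) · √γ` makes the
momentum term `βC ≤ γμ/16`, and `√γ ≤ 1` gives `γ ≤ √γ`. -/
noncomputable def iagmMomentumBound (μ L : ℝ) : ℝ := μ / (64 * L)

noncomputable def iagmStepsizeBound (μ L : ℝ) (K : ℕ) : ℝ := (min 1 (μ / (128 * K * L ^ 2))) ^ 2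

theorem sqrt_le_of_lt_iagmStepsizeBound {μ L γ : ℝ} {K : ℕ} (hμ : 0 < μ) (hL : 0 < L)
    (hK : 1 ≤ K) (hγ0 : 0 ≤ γ) (hγ : γ < iagmStepsizeBound μ L K) :
    √γ ≤ 1 ∧ 128 * K * L ^ 2 * √γ ≤ μ := by
  have hpos : 0 < 128 * (K : ℝ) * L ^ 2 := by positivity
  have h := Real.sqrt_lt_sqrt hγ0 hγ
  rw [iagmStepsizeBound, Real.sqrt_sq (by positivity), lt_min_iff, lt_div_iff₀' hpos] at h
  exact ⟨h.1.le, h.2.le⟩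

section NormedSpace

variable {E : Type*} [NormedAddCommGroup E]

theorem norm_sub_le_sum_Ico_norm_sub (x : ℕ → E) {m j k : ℕ} (hmj : m ≤ j) (hjk : j ≤ k) :
    ‖x j - x k‖ ≤ ∑ l ∈ Ico m k, ‖x (l + 1) - x l‖ := by
  calc ‖x j - x k‖ = dist (x j) (x k) := (dist_eq_norm _ _).symm
    _ ≤ ∑ l ∈ Ico j k, dist (x l) (x (l + 1)) := dist_le_Ico_sum_dist x hjk
    _ = ∑ l ∈ Ico j k, ‖x (l + 1) - x l‖ := by simp only [dist_eq_norm, norm_sub_rev]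
    _ ≤ ∑ l ∈ Ico m k, ‖x (l + 1) - x l‖ :=
        sum_le_sum_of_subset_of_nonneg (Ico_subset_Ico_left hmj) fun _ _ _ => norm_nonneg _

theorem norm_sum_sub_sum_le {ι F : Type*} [NormedAddCommGroup F] (s : Finset ι) (φ : ι → E → F)
    (c : ι → ℝ) (hφ : ∀ i ∈ s, ∀ y z, ‖φ i y - φ i z‖ ≤ c i * ‖y - z‖) (y : ι → E) (z : E) :
    ‖∑ i ∈ s, φ i (y i) - ∑ i ∈ s, φ i z‖ ≤ ∑ i ∈ s, c i * ‖y i - z‖ := by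
  rw [← sum_sub_distrib]
  exact (norm_sum_le _ _).trans (sum_le_sum fun i hi => hφ i hi _ _)

theorem norm_sum_delayed_sub_sum_le {ι F : Type*} [NormedAddCommGroup F] (s : Finset ι)
    (φ : ι → E → F) (c : ι → ℝ) (hc : ∀ i ∈ s, 0 ≤ c i)
    (hφ : ∀ i ∈ s, ∀ y z, ‖φ i y - φ i z‖ ≤ c i * ‖y - z‖) (x : ℕ → E) {τ : ι → ℕ} {m k : ℕ}
    (hτ : ∀ i ∈ s, m ≤ τ i ∧ τ i ≤ k) :
    ‖∑ i ∈ s, φ i (x (τ i)) - ∑ i ∈ s, φ i (x k)‖ ≤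
      (∑ i ∈ s, c i) * ∑ l ∈ Ico m k, ‖x (l + 1) - x l‖ := by
  rw [sum_mul]
  exact (norm_sum_sub_sum_le s φ c hφ _ _).trans (sum_le_sum fun i hi =>
    mul_le_mul_of_nonneg_left (norm_sub_le_sum_Ico_norm_sub x (hτ i hi).1 (hτ i hi).2) (hc i hi))

variable [NormedSpace ℝ E]

theorem ConvexOn.apply_add_fderiv_sub_le {s : Set E} {g : E → ℝ}
    {g' : E →L[ℝ] ℝ} {z w : E} (hg : ConvexOn ℝ s g) (hz : z ∈ s) (hw : w ∈ s)
    (hg' : HasFDerivAt g g' z) :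
    g z + g' (w - z) ≤ g w := by
  have hline := hg.comp_affineMap (AffineMap.lineMap (k := ℝ) z w)
  have hderiv : HasDerivAt (g ∘ AffineMap.lineMap (k := ℝ) z w) (g' (w - z)) 0 :=
    hg'.comp_hasDerivAt_of_eq (0 : ℝ) AffineMap.hasDerivAt_lineMap (by simp)
  have h := hline.le_slope_of_hasDerivAt (x := 0) (y := 1) (by simpa) (by simpa) one_pos hderiv
  simp only [slope, Function.comp_apply, AffineMap.lineMap_apply_zero,
    AffineMap.lineMap_apply_one, sub_zero, inv_one, vsub_eq_sub, one_smul] at h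
  linarith

theorem norm_heavyBall_step_sub_le {γ β : ℝ} (hγ : 0 ≤ γ) (hβ : 0 ≤ β) (z g v m w : E) :
    ‖z - γ • g + β • m - w‖ ≤ ‖z - γ • v - w‖ + γ * ‖g - v‖ + β * ‖m‖ := by
  have hsplit : z - γ • g + β • m - w = (z - γ • v - w) - γ • (g - v) + β • m := by
    rw [smul_sub]; abel
  rw [hsplit]
  refine (norm_add_le _ _).trans (add_le_add ((norm_sub_le _ _).trans_eq ?_) ?_)
  · rw [norm_smul, Real.norm_of_nonneg hγ]
  · rw [norm_smul, Real.norm_of_nonneg hβ]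

theorem heavyBall_delayed_linear_convergence {x g : ℕ → E} {G : E → E} {xs : E}
    {γ β ρ L C r : ℝ} {K : ℕ}
    (hrec : ∀ k, x (k + 1) = x k - γ • g k + β • (x k - x (k - 1)))
    (hcontr : ∀ z, ‖z - γ • G z - xs‖ ≤ ρ * ‖z - xs‖) (hG : ∀ z, ‖G z‖ ≤ L * ‖z - xs‖)
    (herr : ∀ k, ‖g k - G (x k)‖ ≤ L * ∑ l ∈ Ico (k - K) k, ‖x (l + 1) - x l‖)
    (hγ : 0 ≤ γ) (hβ : 0 ≤ β) (hρ : 0 ≤ ρ) (hL : 0 ≤ L) (hC : 0 ≤ C)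
    (hr0 : 0 ≤ r) (hr1 : r ≤ 1) (hrK : 1 / 2 ≤ r ^ K)
    (hdr : ρ + 2 * K * (γ * L) * C + β * C ≤ r)
    (hsr : γ * L + 2 * K * (γ * L) * C + β * C ≤ C * r) (k : ℕ) :
    ‖x k - xs‖ ≤ r ^ k * ‖x 0 - xs‖ := by
  have hstep (k : ℕ) (w : E) : ‖x (k + 1) - w‖ ≤ ‖x k - γ • G (x k) - w‖ +
      γ * L * ∑ l ∈ Ico (k - K) k, ‖x (l + 1) - x l‖ + β * ‖x k - x (k - 1)‖ := by
    rw [hrec k, mul_assoc]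
    refine (norm_heavyBall_step_sub_le hγ hβ _ _ (G (x k)) _ w).trans ?_
    gcongr
    exact herr k
  refine (le_pow_mul_of_delayed_recursion (d := fun k => ‖x k - xs‖)
    (s := fun k => ‖x k - x (k - 1)‖) (norm_nonneg _) (by simp) (fun k => ?_) (fun k => ?_)
    hρ (mul_nonneg hγ hL) hβ hC hr0 hr1 hrK hdr hsr k).1
  · simp only [Nat.add_sub_cancel]
    exact (hstep k xs).trans (by gcongr; exact hcontr _)
  · simp only [Nat.add_sub_cancel]
    refine (hstep k (x k)).trans ?_
    rw [sub_sub_cancel_left, norm_neg, norm_smul, Real.norm_of_nonneg hγ]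
    linarith [mul_le_mul_of_nonneg_left (hG (x k)) hγ]

end NormedSpace

section InnerProductSpace

variable {E : Type*} [NormedAddCommGroup E] [InnerProductSpace ℝ E]

theorem HasGradientAt.fun_sum [CompleteSpace E] {ι : Type*} {s : Finset ι} {f : ι → E → ℝ}
    {f' : ι → E} {z : E} (h : ∀ i ∈ s, HasGradientAt (f i) (f' i) z) :
    HasGradientAt (fun y => ∑ i ∈ s, f i y) (∑ i ∈ s, f' i) z := by
  rw [hasGradientAt_iff_hasFDerivAt, map_sum]
  exact HasFDerivAt.fun_sum fun i hi => hasGradientAt_iff_hasFDerivAt.mp (h i hi)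

theorem StrongConvexOn.mul_norm_sub_sq_le_inner [CompleteSpace E] {F : E → ℝ} {G z xs : E}
    {μ : ℝ} (hF : StrongConvexOn Set.univ μ F) (hG : HasGradientAt F G z) (hmin : F xs ≤ F z) :
    μ / 2 * ‖z - xs‖ ^ 2 ≤ ⟪G, z - xs⟫_ℝ := by
  have hderiv : HasFDerivAt (fun y => F y - μ / 2 * ‖y‖ ^ 2)
      (toDual ℝ E G - (μ / 2) • (2 • innerSL ℝ z)) z :=
    (hasGradientAt_iff_hasFDerivAt.mp hG).sub
      ((hasStrictFDerivAt_norm_sq z).hasFDerivAt.const_mul (μ / 2))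
  have h := (strongConvexOn_iff_convex.mp hF).apply_add_fderiv_sub_le
    (Set.mem_univ z) (Set.mem_univ xs) hderiv
  simp only [sub_apply, smul_apply, toDual_apply_apply, innerSL_apply_apply, smul_eq_mul,
    nsmul_eq_mul] at h
  rw [inner_sub_right, inner_sub_right, real_inner_self_eq_norm_sq] at h
  rw [inner_sub_right, norm_sub_sq_real]
  nlinarith

theorem norm_sub_smul_le_of_inner_ge {a v : E} {μ L γ : ℝ} (hγ : 0 ≤ γ)
    (hinner : μ / 2 * ‖a‖ ^ 2 ≤ ⟪v, a⟫_ℝ) (hv : ‖v‖ ≤ L * ‖a‖) (hγL : γ * L ^ 2 ≤ μ / 2) :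
    ‖a - γ • v‖ ≤ (1 - γ * μ / 4) * ‖a‖ := by
  have hv2 : ‖v‖ ^ 2 ≤ L ^ 2 * ‖a‖ ^ 2 := by
    rw [← mul_pow]; exact pow_le_pow_left₀ (norm_nonneg v) hv 2
  have hsq : ‖a - γ • v‖ ^ 2 ≤ (1 - γ * μ / 2) * ‖a‖ ^ 2 := by
    rw [norm_sub_sq_real, inner_smul_right, norm_smul, Real.norm_of_nonneg hγ, real_inner_comm]
    nlinarith [mul_le_mul_of_nonneg_left hinner hγ, mul_le_mul_of_nonneg_left hv2 (sq_nonneg γ),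
      mul_le_mul_of_nonneg_right hγL (mul_nonneg hγ (sq_nonneg ‖a‖))]
  have hμ : 0 ≤ μ := by nlinarith [sq_nonneg L]
  rcases (norm_nonneg a).eq_or_lt with ha | ha
  · rw [← ha] at hsq ⊢
    nlinarith [norm_nonneg (a - γ • v)]
  have hρ : 0 ≤ 1 - γ * μ / 2 := nonneg_of_mul_nonneg_left ((sq_nonneg _).trans hsq) (by positivity)
  refine le_of_sq_le_sq ?_ (by nlinarith)
  nlinarith [sq_nonneg (γ * μ * ‖a‖)]

theorem iagm_linear_convergence {x g : ℕ → E} {G : E → E} {xs : E} {μ L γ β : ℝ} {K : ℕ}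
    (hμ : 0 < μ) (hμL : μ ≤ L) (hK : 1 ≤ K)
    (hmono : ∀ z, μ / 2 * ‖z - xs‖ ^ 2 ≤ ⟪G z, z - xs⟫_ℝ) (hG : ∀ z, ‖G z‖ ≤ L * ‖z - xs‖)
    (herr : ∀ k, ‖g k - G (x k)‖ ≤ L * ∑ l ∈ Ico (k - K) k, ‖x (l + 1) - x l‖)
    (hrec : ∀ k, x (k + 1) = x k - γ • g k + β • (x k - x (k - 1)))
    (hγ : 0 < γ) (hγbar : γ < iagmStepsizeBound μ L K)
    (hβ : 0 ≤ β) (hβb : β ≤ iagmMomentumBound μ L * √γ) :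
    ∃ r, 0 ≤ r ∧ r < 1 ∧ ∀ k, ‖x k - xs‖ ≤ r ^ k * ‖x 0 - xs‖ := by
  have hL : 0 < L := hμ.trans_le hμL
  have hK' : (1 : ℝ) ≤ K := by exact_mod_cast hK
  obtain ⟨ht1, htμ⟩ := sqrt_le_of_lt_iagmStepsizeBound hμ hL hK hγ.le hγbar
  rw [iagmMomentumBound, div_mul_eq_mul_div, le_div_iff₀ (by positivity)] at hβb
  set t := √γ
  have ht0 : 0 < t := Real.sqrt_pos.mpr hγ
  have hγt : γ = t ^ 2 := (Real.sq_sqrt hγ.le).symm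
  have hγL : γ * L ^ 2 ≤ μ / 2 := by
    rw [hγt]
    nlinarith [mul_le_mul_of_nonneg_left ht1 ht0.le,
      mul_le_mul_of_nonneg_right hK' (mul_nonneg (sq_nonneg L) (sq_nonneg t))]
  have hγμ : γ * μ ≤ 1 / 2 := by nlinarith [mul_le_mul hμL hμL hμ.le hL.le]
  have hKγμ : K * (γ * μ) ≤ 4 := by
    have h : 128 * (K * (γ * μ)) * L ^ 2 ≤ 1 * L ^ 2 := by
      rw [hγt]
      nlinarith [mul_le_mul_of_nonneg_right htμ (mul_nonneg ht0.le hμ.le),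
        mul_le_mul hμL hμL hμ.le hL.le]
    linarith [le_of_mul_le_mul_right h (by positivity)]
  have hrK : 1 / 2 ≤ (1 - γ * μ / 8) ^ K := by
    have := one_add_mul_le_pow (a := -(γ * μ / 8)) (by linarith) K
    rw [← sub_eq_add_neg] at this
    nlinarith
  have hcontr (z : E) : ‖z - γ • G z - xs‖ ≤ (1 - γ * μ / 4) * ‖z - xs‖ := by
    rw [sub_right_comm]; exact norm_sub_smul_le_of_inner_ge hγ.le (hmono z) (hG z) hγL
  refine ⟨1 - γ * μ / 8, by linarith, by nlinarith [mul_pos hγ hμ],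
    heavyBall_delayed_linear_convergence (C := 4 * L * t) hrec hcontr hG herr hγ.le hβ
      (by linarith) hL.le (by positivity) (by linarith) (by nlinarith [mul_pos hγ hμ]) hrK ?_ ?_⟩
  · rw [hγt]; nlinarith
  · have hLt : 0 ≤ L * t := by positivity
    rw [hγt] at hγμ ⊢
    nlinarith [mul_le_mul_of_nonneg_right htμ (sq_nonneg t), mul_le_mul_of_nonneg_right hβb ht0.le,
      mul_le_mul_of_nonneg_right hγμ hLt, mul_le_mul_of_nonneg_right ht1 hLt,
      mul_le_mul_of_nonneg_right hμL (sq_nonneg t)]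

end InnerProductSpace

/-- Global linear convergence of the IAG method with momentum: there are thresholds `b` and
`γ̄`, depending only on `μ`, `L` and `K`, such that for every stepsize `γ ∈ (0, γ̄)` and every
momentum parameter `β ∈ [0, b·√γ]` the IAG-M iterates converge linearly to the optimum. -/
theorem iagm_global_linear_convergence
    (μ L : ℝ) (hμ : 0 < μ) (hμL : μ ≤ L)
    (K : ℕ) (hK : 1 ≤ K) :
    ∃ b : ℝ, 0 < b ∧ ∃ γbar : ℝ, 0 < γbar ∧
      ∀ (n m : ℕ), 1 ≤ m →
      ∀ (f : Fin m → EuclideanSpace ℝ (Fin n) → ℝ)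
        (Li : Fin m → ℝ), (∀ i, 0 ≤ Li i) → L = ∑ i, Li i →
        (∀ i, ConvexOn ℝ Set.univ (f i)) →
        (∀ i, Differentiable ℝ (f i)) →
        (∀ i y z, ‖gradient (f i) y - gradient (f i) z‖ ≤ Li i * ‖y - z‖) →
      ∀ (τ : Fin m → ℕ → ℕ),
        (∀ i k, k - K ≤ τ i k ∧ τ i k ≤ k) → (∀ i, τ i 0 = 0) →
      ∀ (F : EuclideanSpace ℝ (Fin n) → ℝ), F = (fun y => ∑ i, f i y) →
        ConvexOn ℝ Set.univ (fun y => F y - μ / 2 * ‖y‖ ^ 2) →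
      ∀ (xs : EuclideanSpace ℝ (Fin n)), (∀ y, F xs ≤ F y) → gradient F xs = 0 →
      ∀ (x g e : ℕ → EuclideanSpace ℝ (Fin n)),
        (∀ k, g k = ∑ i, gradient (f i) (x (τ i k))) →
        (∀ k, e k = g k - gradient F (x k)) →
      ∀ (γ β : ℝ), 0 < γ → γ < γbar → 0 ≤ β → β ≤ b * Real.sqrt γ →
        x 1 = x 0 - γ • g 0 →
        (∀ k, 1 ≤ k → x (k + 1) = x k - γ • g k + β • (x k - x (k - 1))) →
      ∃ r : ℝ, 0 ≤ r ∧ r < 1 ∧ ∀ k, ‖x k - xs‖ ≤ r ^ k * ‖x 0 - xs‖ := by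
  have hL : 0 < L := hμ.trans_le hμL
  have hK0 : (0 : ℝ) < K := by exact_mod_cast hK
  refine ⟨iagmMomentumBound μ L, div_pos hμ (by positivity), iagmStepsizeBound μ L K,
    pow_pos (lt_min one_pos (div_pos hμ (by positivity))) 2, ?_⟩
  intro n m _ f Li hLi hLsum _ hdiff hLip τ hτ _ F hF hsconv xs hmin hgradxs x g _ hg _
    γ β hγ hγbar hβ hβb hx1 hrec
  set G := fun z => ∑ i, gradient (f i) z
  have hFG (z) : HasGradientAt F (G z) z :=
    hF ▸ HasGradientAt.fun_sum fun i _ => (hdiff i z).hasGradientAt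
  have hmono (z) : μ / 2 * ‖z - xs‖ ^ 2 ≤ ⟪G z, z - xs⟫_ℝ :=
    (strongConvexOn_iff_convex.mpr hsconv).mul_norm_sub_sq_le_inner (hFG z) (hmin z)
  have hG (z) : ‖G z‖ ≤ L * ‖z - xs‖ := by
    have h : ‖G z - G xs‖ ≤ ∑ i, Li i * ‖z - xs‖ :=
      norm_sum_sub_sum_le univ _ Li (fun i _ => hLip i) (fun _ => z) xs
    rwa [← (hFG xs).gradient, hgradxs, sub_zero, ← sum_mul, ← hLsum] at h
  have herr (k) : ‖g k - G (x k)‖ ≤ L * ∑ l ∈ Ico (k - K) k, ‖x (l + 1) - x l‖ := by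
    rw [hg, hLsum]
    exact norm_sum_delayed_sub_sum_le univ _ Li (fun i _ => hLi i) (fun i _ => hLip i) x
      fun i _ => hτ i k
  -- `x (0 - 1) = x 0`, so the momentum term vanishes at `k = 0` and one update rule covers both
  have hrec' : ∀ k, x (k + 1) = x k - γ • g k + β • (x k - x (k - 1)) := by
    rintro (_ | k)
    · simpa using hx1
    · exact hrec (k + 1) k.succ_pos
  exact iagm_linear_convergence hμ hμL hK hmono hG herr hrec' hγ hγbar hβ hβb
end
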